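/- arXiv:hep-th/0511041 — 6 statements merged into one kernel-verified Lean document; each statement's English description precedes it below -/
import Mathlib

section
/- Let ε, E, ω, α, λ be real numbers with λ ≠ 0 and ε ≠ 0, and let Φ be a real-analytic function on a neighborhood of 0 with Φ(0) ≠ 0 which satisfies the generalized Calogero–Yukawa reduced equation Φ''(x) + (2ε/x)·Φ'(x) + [2E − ω²x² − (2√2·α/x)·exp(−√2·x/λ)]·Φ(x) = 0 for all x in some interval (0, δ) with δ > 0. Then the energy is determined by the values of Φ and Φ'' at the singular point x = 0: E = (2α²/ε − 2α/λ) − (2ε+1)·Φ''(0)/(2·Φ(0)). -/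
/-!
Multiplying the equation by `x` turns it into `x Φ'' + 2ε Φ' + Q Φ = 0` with the analytic
coefficient `Q x = 2E x − ω² x³ − 2√2 α e^{−√2 x/λ}`. The left-hand side is analytic at `0` and
vanishes on `(0, δ)`, so by the identity theorem it vanishes near `0`. Its value and its derivative
at `0` give `2ε Φ'(0) = 2√2 α Φ(0)` and `(2ε + 1) Φ''(0) + (2E + 4α/λ) Φ(0) = 2√2 α Φ'(0)`;
eliminating `Φ'(0)` yields the formula for `E`.
-/

open Filter Topology Real

theorem AnalyticAt.eventually_eq_zero_of_eventually_nhdsGT {E : Type*} [NormedAddCommGroup E]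
    [NormedSpace ℝ E] {f : ℝ → E} {a : ℝ} (hf : AnalyticAt ℝ f a)
    (h : ∀ᶠ x in 𝓝[>] a, f x = 0) : ∀ᶠ x in 𝓝 a, f x = 0 :=
  hf.frequently_zero_iff_eventually_zero.1 <|
    h.frequently.filter_mono (nhdsWithin_mono a fun _ hx => (Set.mem_Ioi.1 hx).ne')

section RegularSingular

variable {Φ Q : ℝ → ℝ} {c : ℝ}

theorem regularSingularODE_eventually_nhds (hΦ : AnalyticAt ℝ Φ 0) (hQ : AnalyticAt ℝ Q 0)
    (h : ∀ᶠ x in 𝓝[>] 0, x * deriv (deriv Φ) x + c * deriv Φ x + Q x * Φ x = 0) :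
    ∀ᶠ x in 𝓝 0, x * deriv (deriv Φ) x + c * deriv Φ x + Q x * Φ x = 0 :=
  AnalyticAt.eventually_eq_zero_of_eventually_nhdsGT (by fun_prop) h

theorem regularSingularODE_at_zero (hΦ : AnalyticAt ℝ Φ 0) (hQ : AnalyticAt ℝ Q 0)
    (h : ∀ᶠ x in 𝓝[>] 0, x * deriv (deriv Φ) x + c * deriv Φ x + Q x * Φ x = 0) :
    c * deriv Φ 0 + Q 0 * Φ 0 = 0 := by
  simpa using (regularSingularODE_eventually_nhds hΦ hQ h).self_of_nhds

theorem regularSingularODE_deriv_at_zero (hΦ : AnalyticAt ℝ Φ 0) (hQ : AnalyticAt ℝ Q 0)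
    (h : ∀ᶠ x in 𝓝[>] 0, x * deriv (deriv Φ) x + c * deriv Φ x + Q x * Φ x = 0) :
    (c + 1) * deriv (deriv Φ) 0 + deriv Q 0 * Φ 0 + Q 0 * deriv Φ 0 = 0 := by
  have hΦ₁ : AnalyticAt ℝ (deriv Φ) 0 := hΦ.deriv
  have hΦ₂ : AnalyticAt ℝ (deriv (deriv Φ)) 0 := hΦ₁.deriv
  have hF : HasDerivAt (fun x => x * deriv (deriv Φ) x + c * deriv Φ x + Q x * Φ x)
      ((c + 1) * deriv (deriv Φ) 0 + deriv Q 0 * Φ 0 + Q 0 * deriv Φ 0) 0 := by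
    refine ((((hasDerivAt_id (0 : ℝ)).mul hΦ₂.differentiableAt.hasDerivAt).add
      (hΦ₁.differentiableAt.hasDerivAt.const_mul c)).add
      (hQ.differentiableAt.hasDerivAt.mul hΦ.differentiableAt.hasDerivAt)).congr_deriv ?_
    simp only [id_eq]
    ring
  have hF₀ : (fun x => x * deriv (deriv Φ) x + c * deriv Φ x + Q x * Φ x) =ᶠ[𝓝 0] fun _ => 0 :=
    regularSingularODE_eventually_nhds hΦ hQ h
  rw [← hF.deriv, hF₀.deriv_eq, deriv_const]

end RegularSingular

noncomputable def calogeroYukawaCoeff (E ω α lam x : ℝ) : ℝ :=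
  2 * E * x - ω ^ 2 * x ^ 3 - 2 * √2 * α * exp (-√2 * x / lam)

section CalogeroYukawa

variable {E ω α lam : ℝ}

theorem analyticAt_calogeroYukawaCoeff : AnalyticAt ℝ (calogeroYukawaCoeff E ω α lam) 0 := by
  unfold calogeroYukawaCoeff
  fun_prop

theorem calogeroYukawaCoeff_zero : calogeroYukawaCoeff E ω α lam 0 = -2 * √2 * α := by
  simp [calogeroYukawaCoeff]

theorem hasDerivAt_calogeroYukawaCoeff_zero :
    HasDerivAt (calogeroYukawaCoeff E ω α lam) (2 * E + 4 * α / lam) 0 := by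
  have hexp : HasDerivAt (fun x => exp (-√2 * x / lam)) (-√2 / lam) 0 := by
    simpa using (((hasDerivAt_id' (0 : ℝ)).const_mul (-√2)).div_const lam).exp
  refine ((((hasDerivAt_id (0 : ℝ)).const_mul (2 * E)).sub
    ((hasDerivAt_pow 3 (0 : ℝ)).const_mul (ω ^ 2))).sub (hexp.const_mul (2 * √2 * α))).congr_deriv ?_
  have hsqrt : √2 * √2 = 2 := Real.mul_self_sqrt zero_le_two
  linear_combination (2 * α / lam) * hsqrt

theorem mul_calogeroYukawa_eq {ε : ℝ} {Φ : ℝ → ℝ} {x : ℝ} (hx : x ≠ 0) :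
    x * (deriv (deriv Φ) x + (2 * ε / x) * deriv Φ x +
        (2 * E - ω ^ 2 * x ^ 2 - (2 * √2 * α / x) * exp (-√2 * x / lam)) * Φ x) =
      x * deriv (deriv Φ) x + 2 * ε * deriv Φ x + calogeroYukawaCoeff E ω α lam x * Φ x := by
  unfold calogeroYukawaCoeff
  field_simp

end CalogeroYukawa

theorem calogero_yukawa_energy_formula_general
    (ε E ω α lam : ℝ) (hε : ε ≠ 0)
    (Φ : ℝ → ℝ) (hA : AnalyticAt ℝ Φ 0) (h0 : Φ 0 ≠ 0)
    (δ : ℝ) (hδ : 0 < δ)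
    (hODE : ∀ x ∈ Set.Ioo (0 : ℝ) δ,
      deriv (deriv Φ) x + (2 * ε / x) * deriv Φ x +
        (2 * E - ω ^ 2 * x ^ 2
          - (2 * Real.sqrt 2 * α / x) * Real.exp (-Real.sqrt 2 * x / lam)) * Φ x = 0) :
    E = (2 * α ^ 2 / ε - 2 * α / lam)
        - (2 * ε + 1) * deriv (deriv Φ) 0 / (2 * Φ 0) := by
  have hreg : ∀ᶠ x in 𝓝[>] 0, x * deriv (deriv Φ) x + 2 * ε * deriv Φ x +
      calogeroYukawaCoeff E ω α lam x * Φ x = 0 := by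
    filter_upwards [Ioo_mem_nhdsGT hδ] with x hx
    rw [← mul_calogeroYukawa_eq hx.1.ne', hODE x hx, mul_zero]
  have h₀ := regularSingularODE_at_zero hA analyticAt_calogeroYukawaCoeff hreg
  have h₁ := regularSingularODE_deriv_at_zero hA analyticAt_calogeroYukawaCoeff hreg
  rw [calogeroYukawaCoeff_zero] at h₀ h₁
  rw [hasDerivAt_calogeroYukawaCoeff_zero.deriv] at h₁
  have hsqrt : √2 * √2 = 2 := Real.mul_self_sqrt zero_le_two
  field_simp
  linear_combination ε * h₁ + √2 * α * h₀ + 2 * α ^ 2 * Φ 0 * hsqrt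

/-- Calogero model with Yukawa-like interaction: for an analytic solution `Φ` of the
reduced equation with `Φ 0 ≠ 0`, the energy is determined by `Φ 0` and `Φ'' 0`:
`E = (2α²/ε − 2α/λ) − (2ε+1)·Φ''(0)/(2·Φ(0))`. -/
theorem calogero_yukawa_energy_formula
    (ε E ω α lam : ℝ) (hlam : lam ≠ 0) (hε : ε ≠ 0)
    (Φ : ℝ → ℝ) (hA : AnalyticAt ℝ Φ 0) (h0 : Φ 0 ≠ 0)
    (δ : ℝ) (hδ : 0 < δ)
    (hODE : ∀ x ∈ Set.Ioo (0 : ℝ) δ,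
      deriv (deriv Φ) x + (2 * ε / x) * deriv Φ x +
        (2 * E - ω ^ 2 * x ^ 2
          - (2 * Real.sqrt 2 * α / x) * Real.exp (-Real.sqrt 2 * x / lam)) * Φ x = 0) :
    E = (2 * α ^ 2 / ε - 2 * α / lam)
        - (2 * ε + 1) * deriv (deriv Φ) 0 / (2 * Φ 0) :=
  calogero_yukawa_energy_formula_general ε E ω α lam hε Φ hA h0 δ hδ hODE
end

section
/- Let ε, E, ω, α, λ be real numbers with λ ≠ 0, and let Φ be a real-analytic function on a neighborhood of 0 satisfying the generalized Calogero–Yukawa reduced equation Φ''(x) + (2ε/x)·Φ'(x) + [2E − ω²x² − (2√2·α/x)·exp(−√2·x/λ)]·Φ(x) = 0 for all x in some interval (0, δ) with δ > 0. Writing C_k = Φ^{(k)}(0)/k! for the Taylor coefficients of Φ at 0 (with the convention C_j = 0 for j < 0), the coefficients satisfy the recurrence relation k·(2ε + k − 1)·C_k = 2α·Σ_{m=0}^{k−1} ((−1)^m · 2^{(m+1)/2} / (m!·λ^m)) · C_{k−m−1} + ω²·C_{k−4} − 2E·C_{k−2} for every integer k ≥ 4. -/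
/-!
Multiplying the equation by `x` removes the poles: `x Φ'' + 2εΦ' + (2Ex - ω²x³) Φ
- 2√2 α e^{-√2 x/λ} Φ` is analytic at `0` and vanishes on `(0, δ)`, hence, by the principle of
isolated zeros, on a whole neighbourhood of `0`. All its Taylor coefficients at `0` therefore
vanish, and the Leibniz rule together with the exponential series shows that the coefficient of
`x^(k-1)` is the difference of the two sides of the recurrence.
-/

open Filter Topology Nat

section TaylorCoeff

variable {𝕜 : Type*} [NontriviallyNormedField 𝕜]

noncomputable def taylorCoeff (f : 𝕜 → 𝕜) (n : ℕ) : 𝕜 := iteratedDeriv n f 0 / n !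

variable {f g : 𝕜 → 𝕜} {n : ℕ}

theorem taylorCoeff_add (hf : ContDiffAt 𝕜 n f 0) (hg : ContDiffAt 𝕜 n g 0) :
    taylorCoeff (fun x ↦ f x + g x) n = taylorCoeff f n + taylorCoeff g n := by
  rw [taylorCoeff, iteratedDeriv_fun_add hf hg, add_div]; rfl

theorem taylorCoeff_sub (hf : ContDiffAt 𝕜 n f 0) (hg : ContDiffAt 𝕜 n g 0) :
    taylorCoeff (fun x ↦ f x - g x) n = taylorCoeff f n - taylorCoeff g n := by
  rw [taylorCoeff, iteratedDeriv_fun_sub hf hg, sub_div]; rfl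

theorem taylorCoeff_const_mul (c : 𝕜) :
    taylorCoeff (fun x ↦ c * f x) n = c * taylorCoeff f n := by
  rw [taylorCoeff, iteratedDeriv_const_mul_field, mul_div_assoc]; rfl

theorem taylorCoeff_eq_zero_of_eventuallyEq_zero (h : f =ᶠ[𝓝 0] 0) (n : ℕ) :
    taylorCoeff f n = 0 := by
  rw [taylorCoeff, h.iteratedDeriv_eq, iteratedDeriv_const_zero, zero_div]

variable [CharZero 𝕜]

theorem taylorCoeff_deriv (f : 𝕜 → 𝕜) (n : ℕ) :
    taylorCoeff (deriv f) n = (n + 1) * taylorCoeff f (n + 1) := by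
  simp only [taylorCoeff, iteratedDeriv_succ', factorial_succ, cast_mul, cast_succ]
  field_simp

theorem taylorCoeff_mul (hf : ContDiffAt 𝕜 n f 0) (hg : ContDiffAt 𝕜 n g 0) :
    taylorCoeff (fun x ↦ f x * g x) n =
      ∑ i ∈ Finset.range (n + 1), taylorCoeff f i * taylorCoeff g (n - i) := by
  rw [taylorCoeff, iteratedDeriv_fun_mul hf hg, Finset.sum_div]
  refine Finset.sum_congr rfl fun i hi ↦ ?_
  have hin : i ≤ n := Finset.mem_range_succ_iff.mp hi
  have hchoose : (n.choose i : 𝕜) ≠ 0 := Nat.cast_ne_zero.mpr (choose_pos hin).ne'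
  rw [taylorCoeff, taylorCoeff, ← choose_mul_factorial_mul_factorial hin]
  push_cast
  field_simp

theorem taylorCoeff_pow (j i : ℕ) :
    taylorCoeff (fun x : 𝕜 ↦ x ^ j) i = if i = j then 1 else 0 := by
  rw [taylorCoeff, iteratedDeriv_fun_pow_zero]
  split_ifs <;> simp_all [factorial_ne_zero]

theorem taylorCoeff_pow_mul {j : ℕ} (hj : j ≤ n) (hf : ContDiffAt 𝕜 n f 0) :
    taylorCoeff (fun x ↦ x ^ j * f x) n = taylorCoeff f (n - j) := by
  rw [taylorCoeff_mul (by fun_prop) hf, Finset.sum_eq_single j]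
  · simp [taylorCoeff_pow]
  · intro i _ hij
    simp [taylorCoeff_pow, hij]
  · intro hj'
    exact absurd (Finset.mem_range_succ_iff.mpr hj) hj'

theorem taylorCoeff_id_mul (hn : 0 < n) (hf : ContDiffAt 𝕜 n f 0) :
    taylorCoeff (fun x ↦ x * f x) n = taylorCoeff f (n - 1) := by
  simpa using taylorCoeff_pow_mul hn hf

end TaylorCoeff

theorem Real.taylorCoeff_exp_const_mul (c : ℝ) (n : ℕ) :
    taylorCoeff (fun x ↦ Real.exp (c * x)) n = c ^ n / n ! := by
  simp [taylorCoeff, iteratedDeriv_exp_const_mul]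

theorem AnalyticAt.eventuallyEq_zero_of_forall_mem_Ioo {f : ℝ → ℝ} (hf : AnalyticAt ℝ f 0)
    {δ : ℝ} (hδ : 0 < δ) (h : ∀ x ∈ Set.Ioo 0 δ, f x = 0) : f =ᶠ[𝓝 0] 0 := by
  refine hf.frequently_zero_iff_eventually_zero.mp ?_
  have h_right : ∀ᶠ x in 𝓝[>] (0 : ℝ), f x = 0 := by
    filter_upwards [Ioo_mem_nhdsGT hδ] using h
  exact h_right.frequently.filter_mono (nhdsGT_le_nhdsNE 0)

section CalogeroYukawa

variable (ε E ω α lam : ℝ)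

noncomputable def calogeroYukawaOp (Φ : ℝ → ℝ) (x : ℝ) : ℝ :=
  x * deriv (deriv Φ) x + 2 * ε * deriv Φ x + 2 * E * (x * Φ x) - ω ^ 2 * (x ^ 3 * Φ x)
    - 2 * Real.sqrt 2 * α * (Real.exp (-Real.sqrt 2 / lam * x) * Φ x)

variable {Φ : ℝ → ℝ}

theorem calogeroYukawaOp_eq_mul {x : ℝ} (hx : x ≠ 0) :
    calogeroYukawaOp ε E ω α lam Φ x = x * (deriv (deriv Φ) x + (2 * ε / x) * deriv Φ x +
      (2 * E - ω ^ 2 * x ^ 2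
        - (2 * Real.sqrt 2 * α / x) * Real.exp (-Real.sqrt 2 * x / lam)) * Φ x) := by
  have hε : x * (2 * ε / x) = 2 * ε := by field_simp
  have hα : x * (2 * Real.sqrt 2 * α / x) = 2 * Real.sqrt 2 * α := by field_simp
  rw [calogeroYukawaOp, show -Real.sqrt 2 / lam * x = -Real.sqrt 2 * x / lam by ring]
  linear_combination -deriv Φ x * hε + Real.exp (-Real.sqrt 2 * x / lam) * Φ x * hα

attribute [local fun_prop] AnalyticAt.contDiffAt

theorem AnalyticAt.calogeroYukawaOp (hΦ : AnalyticAt ℝ Φ 0) :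
    AnalyticAt ℝ (calogeroYukawaOp ε E ω α lam Φ) 0 := by
  have hΦ'' := hΦ.deriv.deriv
  unfold _root_.calogeroYukawaOp
  fun_prop

theorem taylorCoeff_calogeroYukawaOp (hΦ : AnalyticAt ℝ Φ 0) (n : ℕ) :
    taylorCoeff (calogeroYukawaOp ε E ω α lam Φ) (n + 3) =
      (n + 4) * (2 * ε + (n + 4) - 1) * taylorCoeff Φ (n + 4) + 2 * E * taylorCoeff Φ (n + 2)
        - ω ^ 2 * taylorCoeff Φ n
        - 2 * α * ∑ m ∈ Finset.range (n + 4), ((-1) ^ m * (Real.sqrt 2 * Real.sqrt 2 ^ m)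
          / (m ! * lam ^ m)) * taylorCoeff Φ (n + 3 - m) := by
  have hΦ' := hΦ.deriv
  have hΦ'' := hΦ'.deriv
  unfold calogeroYukawaOp
  simp (disch := first | fun_prop | omega) only [taylorCoeff_add,
    taylorCoeff_sub, taylorCoeff_const_mul, taylorCoeff_id_mul, taylorCoeff_pow_mul,
    taylorCoeff_mul, Real.taylorCoeff_exp_const_mul, taylorCoeff_deriv]
  have hsum : ∑ m ∈ Finset.range (n + 4), ((-1) ^ m * (Real.sqrt 2 * Real.sqrt 2 ^ m)
      / (m ! * lam ^ m)) * taylorCoeff Φ (n + 3 - m)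
      = Real.sqrt 2 * ∑ m ∈ Finset.range (n + 3 + 1), (-Real.sqrt 2 / lam) ^ m / m !
        * taylorCoeff Φ (n + 3 - m) := by
    rw [Finset.mul_sum]
    refine Finset.sum_congr rfl fun m _ ↦ ?_
    rw [div_pow, neg_pow]
    ring
  rw [hsum, show n + 3 - 1 = n + 2 by omega, show n + 3 - 3 = n by omega]
  push_cast
  ring

end CalogeroYukawa

theorem calogero_yukawa_recurrence_general
    (ε E ω α lam : ℝ)
    (Φ : ℝ → ℝ) (hA : AnalyticAt ℝ Φ 0)
    (δ : ℝ) (hδ : 0 < δ)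
    (hODE : ∀ x ∈ Set.Ioo (0 : ℝ) δ,
      deriv (deriv Φ) x + (2 * ε / x) * deriv Φ x +
        (2 * E - ω ^ 2 * x ^ 2
          - (2 * Real.sqrt 2 * α / x) * Real.exp (-Real.sqrt 2 * x / lam)) * Φ x = 0)
    (C : ℕ → ℝ) (hC : ∀ k, C k = iteratedDeriv k Φ 0 / (Nat.factorial k : ℝ)) :
    ∀ k : ℕ, 4 ≤ k →
      (k : ℝ) * (2 * ε + (k : ℝ) - 1) * C k
        = 2 * α * ∑ m ∈ Finset.range k,
            ((-1 : ℝ) ^ m * (Real.sqrt 2 * (Real.sqrt 2) ^ m)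
              / ((Nat.factorial m : ℝ) * lam ^ m)) * C (k - m - 1)
          + ω ^ 2 * C (k - 4) - 2 * E * C (k - 2) := by
  intro k hk
  obtain ⟨n, rfl⟩ : ∃ n, k = n + 4 := ⟨k - 4, by omega⟩
  obtain rfl : C = taylorCoeff Φ := funext hC
  have hvanish : calogeroYukawaOp ε E ω α lam Φ =ᶠ[𝓝 0] 0 :=
    (hA.calogeroYukawaOp ε E ω α lam).eventuallyEq_zero_of_forall_mem_Ioo hδ fun x hx ↦ by
      rw [calogeroYukawaOp_eq_mul ε E ω α lam hx.1.ne', hODE x hx, mul_zero]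
  have hcoeff := taylorCoeff_eq_zero_of_eventuallyEq_zero hvanish (n + 3)
  rw [taylorCoeff_calogeroYukawaOp ε E ω α lam hA] at hcoeff
  simp only [show n + 4 - 4 = n by omega, show n + 4 - 2 = n + 2 by omega,
    show ∀ m, n + 4 - m - 1 = n + 3 - m by omega]
  push_cast
  linear_combination hcoeff

/-- Recurrence relation satisfied by the Taylor coefficients `C k = Φ⁽ᵏ⁾(0)/k!` of an
analytic solution of the generalized Calogero–Yukawa reduced equation, for `k ≥ 4`:
`k(2ε+k−1)·C_k = 2α·Σ_{m=0}^{k−1} ((−1)^m 2^{(m+1)/2}/(m! λ^m))·C_{k−m−1} + ω²·C_{k−4} − 2E·C_{k−2}`. -/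
theorem calogero_yukawa_recurrence
    (ε E ω α lam : ℝ) (hlam : lam ≠ 0)
    (Φ : ℝ → ℝ) (hA : AnalyticAt ℝ Φ 0)
    (δ : ℝ) (hδ : 0 < δ)
    (hODE : ∀ x ∈ Set.Ioo (0 : ℝ) δ,
      deriv (deriv Φ) x + (2 * ε / x) * deriv Φ x +
        (2 * E - ω ^ 2 * x ^ 2
          - (2 * Real.sqrt 2 * α / x) * Real.exp (-Real.sqrt 2 * x / lam)) * Φ x = 0)
    (C : ℕ → ℝ) (hC : ∀ k, C k = iteratedDeriv k Φ 0 / (Nat.factorial k : ℝ)) :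
    ∀ k : ℕ, 4 ≤ k →
      (k : ℝ) * (2 * ε + (k : ℝ) - 1) * C k
        = 2 * α * ∑ m ∈ Finset.range k,
            ((-1 : ℝ) ^ m * (Real.sqrt 2 * (Real.sqrt 2) ^ m)
              / ((Nat.factorial m : ℝ) * lam ^ m)) * C (k - m - 1)
          + ω ^ 2 * C (k - 4) - 2 * E * C (k - 2) :=
  calogero_yukawa_recurrence_general ε E ω α lam Φ hA δ hδ hODE C hC
end

section
/- Let ω > 0, let ε be a real number with ε > −1/2, let n be a natural number, set g = ε(ε−1), and define for u > 0 the generalized Laguerre function L_n^{(ε−1/2)}(u) = (1/n!)·u^{−(ε−1/2)}·e^u·(d/du)^n [u^{ε−1/2+n}·e^{−u}]. Then the wave function Ψ_n(x) = x^ε·exp(−ωx²/2)·L_n^{(ε−1/2)}(ωx²) satisfies the Calogero eigenvalue equation −(1/2)·Ψ_n''(x) + [ω²x²/2 + g/(2x²)]·Ψ_n(x) = E_n·Ψ_n(x) for all x > 0, with discrete energy E_n = (2n + ε + 1/2)·ω. -/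
/-!
Expanding the Rodrigues formula by the Leibniz rule shows that `laguerreFn n a` agrees on
`u > 0` with a polynomial `L` of degree `n` whose coefficients satisfy a two-term recurrence;
that recurrence is Laguerre's equation `u L'' + (a + 1 - u) L' + n L = 0`. For
`Ψ(x) = φ(x) L(ωx²)` with `φ(x) = x^ε e^{-ωx²/2}` one has `φ'/φ = ε/x - ωx`, and after dividing
by `φ` the Calogero equation becomes a multiple of Laguerre's equation at `u = ωx²`,
`a = ε - 1/2`.
-/

/-- The generalized Laguerre function of degree `n` and (real) index `a`, given by the
Rodrigues formula `L_n^a(u) = (1/n!)·u^{−a}·e^u·(d/du)^n [u^{a+n}·e^{−u}]`. -/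
noncomputable def laguerreFn (n : ℕ) (a : ℝ) (u : ℝ) : ℝ :=
  (1 / (Nat.factorial n : ℝ)) * u ^ (-a) * Real.exp u *
    iteratedDeriv n (fun v : ℝ => v ^ (a + (n : ℝ)) * Real.exp (-v)) u

section Laguerre

open Polynomial Finset Nat

/-- The factor `n.choose m` makes the coefficients vanish for `m > n`. -/
noncomputable def laguerreCoeff (n : ℕ) (a : ℝ) (m : ℕ) : ℝ :=
  n.choose m / n ! * (descPochhammer ℝ (n - m)).eval (a + n) * (-1) ^ m

noncomputable def laguerrePoly (n : ℕ) (a : ℝ) : ℝ[X] :=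
  ∑ m ∈ range (n + 1), C (laguerreCoeff n a m) * X ^ m

theorem laguerreCoeff_eq_zero_of_lt {n m : ℕ} (a : ℝ) (h : n < m) : laguerreCoeff n a m = 0 := by
  simp [laguerreCoeff, Nat.choose_eq_zero_of_lt h]

theorem coeff_laguerrePoly (n : ℕ) (a : ℝ) (m : ℕ) :
    (laguerrePoly n a).coeff m = laguerreCoeff n a m := by
  simp only [laguerrePoly, finsetSum_coeff, coeff_C_mul_X_pow, sum_ite_eq, mem_range]
  split_ifs with h
  · rfl
  · exact (laguerreCoeff_eq_zero_of_lt a (by omega)).symm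

theorem laguerreCoeff_succ (n : ℕ) (a : ℝ) (m : ℕ) :
    (m + 1) * (m + 1 + a) * laguerreCoeff n a (m + 1) + (n - m) * laguerreCoeff n a m = 0 := by
  rcases lt_or_ge m n with hm | hm
  · have hchoose : (n.choose (m + 1) : ℝ) * (m + 1) = n.choose m * (n - m) := by
      have := congrArg (Nat.cast : ℕ → ℝ) (Nat.choose_succ_right_eq n m)
      push_cast [Nat.cast_sub hm.le] at this
      exact this
    have hdesc : (descPochhammer ℝ (n - m)).eval (a + n)
        = (descPochhammer ℝ (n - (m + 1))).eval (a + n) * (a + m + 1) := by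
      rw [show n - m = n - (m + 1) + 1 by omega, descPochhammer_succ_eval,
        Nat.cast_sub (by omega : m + 1 ≤ n)]
      push_cast
      ring
    simp only [laguerreCoeff, hdesc]
    linear_combination -(-1) ^ m * (a + m + 1) / n ! *
      (descPochhammer ℝ (n - (m + 1))).eval (a + n) * hchoose
  · rw [laguerreCoeff_eq_zero_of_lt a (by omega)]
    rcases hm.eq_or_lt with rfl | hm
    · ring
    · rw [laguerreCoeff_eq_zero_of_lt a hm]
      ring

theorem laguerrePoly_ode (n : ℕ) (a : ℝ) :
    X * derivative (derivative (laguerrePoly n a))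
        + (C (a + 1) - X) * derivative (laguerrePoly n a) + C (n : ℝ) * laguerrePoly n a = 0 := by
  ext (_ | m)
  · simp only [map_add, map_one, sub_mul, add_mul, one_mul, map_natCast, coeff_add,
      mul_coeff_zero, coeff_X_zero, coeff_derivative, zero_add, coeff_laguerrePoly, cast_one,
      CharP.cast_eq_zero, mul_one, zero_mul, coeff_sub, coeff_C_zero, sub_zero, coeff_natCast_ite,
      ↓reduceIte, coeff_zero]
    linear_combination laguerreCoeff_succ n a 0
  · simp only [map_add, map_one, sub_mul, add_mul, one_mul, map_natCast, coeff_add, coeff_X_mul,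
      coeff_derivative, coeff_laguerrePoly, coeff_sub, coeff_C_mul, coeff_natCast_mul, coeff_zero]
    have h := laguerreCoeff_succ n a (m + 1)
    push_cast at h ⊢
    linear_combination h

theorem iteratedDeriv_rpow_mul_exp_neg (n : ℕ) (b : ℝ) {u : ℝ} (hu : u ≠ 0) :
    iteratedDeriv n (fun v : ℝ => v ^ b * Real.exp (-v)) u
      = ∑ k ∈ range (n + 1), n.choose k * ((descPochhammer ℝ k).eval b * u ^ (b - k))
          * ((-1) ^ (n - k) * Real.exp (-u)) := by
  have hexp (j : ℕ) :
      iteratedDeriv j (fun v : ℝ => Real.exp (-v)) u = (-1) ^ j * Real.exp (-u) := by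
    simpa using congrFun (iteratedDeriv_exp_const_mul j (-1)) u
  rw [iteratedDeriv_fun_mul (Real.contDiffAt_rpow_const (Or.inl hu))
    (by fun_prop : ContDiffAt ℝ n (fun v : ℝ => Real.exp (-v)) u)]
  simp only [hexp, iteratedDeriv_eq_iterate, Real.iter_deriv_rpow_const]

theorem laguerreFn_eq_eval (n : ℕ) (a : ℝ) {u : ℝ} (hu : 0 < u) :
    laguerreFn n a u = (laguerrePoly n a).eval u := by
  rw [laguerreFn, iteratedDeriv_rpow_mul_exp_neg n _ hu.ne', laguerrePoly, eval_finsetSum,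
    ← sum_range_reflect, mul_sum]
  refine sum_congr rfl fun k hk => ?_
  have hk : k ≤ n := Nat.lt_succ_iff.mp (mem_range.mp hk)
  have hpow : u ^ (-a) * u ^ (a + n - (n - k : ℕ)) = u ^ k := by
    rw [← Real.rpow_add hu, ← Real.rpow_natCast, Nat.cast_sub hk]
    ring_nf
  have hexp : Real.exp u * Real.exp (-u) = 1 := by
    rw [← Real.exp_add, add_neg_cancel, Real.exp_zero]
  simp only [add_tsub_cancel_right, eval_mul, eval_C, eval_pow, eval_X, laguerreCoeff,
    Nat.sub_sub_self hk, Nat.choose_symm hk]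
  set c := (n ! : ℝ)⁻¹ * n.choose k * (descPochhammer ℝ (n - k)).eval (a + n) * (-1) ^ k
  linear_combination c * u ^ (-a) * u ^ (a + n - (n - k : ℕ)) * hexp + c * hpow

end Laguerre

section Calogero

open Polynomial Filter Topology

theorem deriv_deriv_mul {𝕜 : Type*} [NontriviallyNormedField 𝕜] {f g f' g' : 𝕜 → 𝕜}
    {f'' g'' x : 𝕜} (hf : ∀ᶠ y in 𝓝 x, HasDerivAt f (f' y) y) (hf' : HasDerivAt f' f'' x)
    (hg : ∀ᶠ y in 𝓝 x, HasDerivAt g (g' y) y) (hg' : HasDerivAt g' g'' x) :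
    deriv (deriv fun y => f y * g y) x = f'' * g x + 2 * (f' x * g' x) + f x * g'' := by
  have hderiv : deriv (fun y => f y * g y) =ᶠ[𝓝 x] fun y => f' y * g y + f y * g' y := by
    filter_upwards [hf, hg] with y hfy hgy
    exact (hfy.mul hgy).deriv
  rw [hderiv.deriv_eq,
    ((hf'.fun_mul hg.self_of_nhds).fun_add (hf.self_of_nhds.fun_mul hg')).deriv]
  ring

theorem hasDerivAt_rpow_mul_exp (ε ω : ℝ) {x : ℝ} (hx : 0 < x) :
    HasDerivAt (fun y => y ^ ε * Real.exp (-ω * y ^ 2 / 2))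
      (x ^ ε * Real.exp (-ω * x ^ 2 / 2) * (ε / x - ω * x)) x := by
  have hpow := Real.hasDerivAt_rpow_const (p := ε) (Or.inl hx.ne')
  have hexp := ((hasDerivAt_pow 2 x).const_mul (-ω) |>.div_const 2).exp
  refine (hpow.fun_mul hexp).congr_deriv ?_
  rw [Real.rpow_sub_one hx.ne']
  field_simp
  ring

theorem hasDerivAt_rpow_mul_exp_mul (ε ω : ℝ) {x : ℝ} (hx : 0 < x) :
    HasDerivAt (fun y => y ^ ε * Real.exp (-ω * y ^ 2 / 2) * (ε / y - ω * y))
      (x ^ ε * Real.exp (-ω * x ^ 2 / 2) * ((ε / x - ω * x) ^ 2 - ε / x ^ 2 - ω)) x := by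
  have hlog : HasDerivAt (fun y => ε / y - ω * y) (-ε / x ^ 2 - ω) x := by
    simp only [div_eq_mul_inv]
    refine (((hasDerivAt_inv hx.ne').const_mul ε).fun_sub
      ((hasDerivAt_id' x).const_mul ω)).congr_deriv ?_
    ring
  refine ((hasDerivAt_rpow_mul_exp ε ω hx).fun_mul hlog).congr_deriv ?_
  ring

theorem hasDerivAt_eval_mul_sq (p : ℝ[X]) (ω y : ℝ) :
    HasDerivAt (fun y => p.eval (ω * y ^ 2)) (2 * ω * y * p.derivative.eval (ω * y ^ 2)) y := by
  refine ((p.hasDerivAt (ω * y ^ 2)).comp y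
    ((hasDerivAt_pow 2 y).const_mul ω)).congr_deriv ?_
  push_cast
  ring

theorem calogero_eq_of_laguerre_ode {p : ℝ[X]} {ε ω ν : ℝ}
    (hp : X * derivative (derivative p) + (C (ε + 1 / 2) - X) * derivative p + C ν * p = 0)
    {x : ℝ} (hx : 0 < x) :
    -(1 / 2) * deriv (deriv fun y => y ^ ε * Real.exp (-ω * y ^ 2 / 2) * p.eval (ω * y ^ 2)) x
        + (ω ^ 2 * x ^ 2 / 2 + ε * (ε - 1) / (2 * x ^ 2))
          * (x ^ ε * Real.exp (-ω * x ^ 2 / 2) * p.eval (ω * x ^ 2))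
      = ((2 * ν + ε + 1 / 2) * ω) * (x ^ ε * Real.exp (-ω * x ^ 2 / 2) * p.eval (ω * x ^ 2)) := by
  have hweight : ∀ᶠ y in 𝓝 x, HasDerivAt (fun y => y ^ ε * Real.exp (-ω * y ^ 2 / 2))
      (y ^ ε * Real.exp (-ω * y ^ 2 / 2) * (ε / y - ω * y)) y :=
    Filter.mem_of_superset (Ioi_mem_nhds hx) fun y hy => hasDerivAt_rpow_mul_exp ε ω hy
  have hpoly' : HasDerivAt (fun y => 2 * ω * y * p.derivative.eval (ω * y ^ 2))
      (2 * ω * p.derivative.eval (ω * x ^ 2)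
        + 2 * ω * x * (2 * ω * x * p.derivative.derivative.eval (ω * x ^ 2))) x := by
    refine (((hasDerivAt_id' x).const_mul (2 * ω)).fun_mul
      (hasDerivAt_eval_mul_sq p.derivative ω x)).congr_deriv ?_
    ring
  rw [deriv_deriv_mul hweight (hasDerivAt_rpow_mul_exp_mul ε ω hx)
    (.of_forall (hasDerivAt_eval_mul_sq p ω)) hpoly']
  have hode := congrArg (eval (ω * x ^ 2)) hp
  simp only [eval_add, eval_mul, eval_X, eval_sub, eval_C, eval_zero] at hode
  field_simp
  linear_combination (-4 * ω * x ^ 2) * hode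

end Calogero

theorem calogero_spectrum_general
    (ω ε : ℝ) (hω : 0 < ω) (n : ℕ) :
    ∀ x ∈ Set.Ioi (0 : ℝ),
      -(1/2) * deriv (deriv (fun y : ℝ =>
            y ^ ε * Real.exp (-ω * y ^ 2 / 2) * laguerreFn n (ε - 1/2) (ω * y ^ 2))) x
        + (ω ^ 2 * x ^ 2 / 2 + (ε * (ε - 1)) / (2 * x ^ 2))
          * (x ^ ε * Real.exp (-ω * x ^ 2 / 2) * laguerreFn n (ε - 1/2) (ω * x ^ 2))
        = ((2 * (n : ℝ) + ε + 1/2) * ω)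
          * (x ^ ε * Real.exp (-ω * x ^ 2 / 2) * laguerreFn n (ε - 1/2) (ω * x ^ 2)) := by
  intro x hx
  have hΨ : (fun y : ℝ => y ^ ε * Real.exp (-ω * y ^ 2 / 2) * laguerreFn n (ε - 1/2) (ω * y ^ 2))
      =ᶠ[nhds x] fun y => y ^ ε * Real.exp (-ω * y ^ 2 / 2)
        * (laguerrePoly n (ε - 1/2)).eval (ω * y ^ 2) := by
    filter_upwards [Ioi_mem_nhds hx] with y hy
    rw [laguerreFn_eq_eval n _ (mul_pos hω (pow_pos hy 2))]
  have hode := laguerrePoly_ode n (ε - 1/2)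
  rw [show ε - 1/2 + 1 = ε + 1/2 by ring] at hode
  rw [hΨ.deriv.deriv_eq, laguerreFn_eq_eval n _ (mul_pos hω (pow_pos hx 2))]
  exact calogero_eq_of_laguerre_ode hode hx

/-- The wave functions `Ψ_n(x) = x^ε·exp(−ωx²/2)·L_n^{(ε−1/2)}(ωx²)` solve the Calogero
eigenvalue equation with `g = ε(ε−1)` and discrete energies `E_n = (2n+ε+1/2)·ω`. -/
theorem calogero_spectrum
    (ω ε : ℝ) (hω : 0 < ω) (hε : ε > -(1/2)) (n : ℕ) :
    ∀ x ∈ Set.Ioi (0 : ℝ),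
      -(1/2) * deriv (deriv (fun y : ℝ =>
            y ^ ε * Real.exp (-ω * y ^ 2 / 2) * laguerreFn n (ε - 1/2) (ω * y ^ 2))) x
        + (ω ^ 2 * x ^ 2 / 2 + (ε * (ε - 1)) / (2 * x ^ 2))
          * (x ^ ε * Real.exp (-ω * x ^ 2 / 2) * laguerreFn n (ε - 1/2) (ω * x ^ 2))
        = ((2 * (n : ℝ) + ε + 1/2) * ω)
          * (x ^ ε * Real.exp (-ω * x ^ 2 / 2) * laguerreFn n (ε - 1/2) (ω * x ^ 2)) :=
  calogero_spectrum_general ω ε hω n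
end

section
/- Let E, ω, α, λ be real numbers with λ ≠ 0, and set c_m = (−1)^m·2^{(m+1)/2}/(m!·λ^m) for m ∈ ℕ. Let (a_k)_{k≥0} be the sequence defined by an arbitrary a_0 together with the recurrence k(k+1)·a_k = 2α·Σ_{m=0}^{k−1} c_m·a_{k−m−1} + ω²·a_{k−4} − 2E·a_{k−2} for all k ≥ 1 (with a_j = 0 for j < 0), and let (b_k)_{k≥0} be the sequence defined by b_0 = 0, an arbitrary b_1, and the recurrence k(k−1)·b_k = 2α·Σ_{m=0}^{k−1} c_m·b_{k−m−1} + ω²·b_{k−4} − 2E·b_{k−2} for all k ≥ 2 (with b_j = 0 for j < 0). Then for every k ≥ 0 one has the proportionality a_k·b_1 = b_{k+1}·a_0. -/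
/-- Proportionality of the mode sequences of the two branches `ε₊ = 1` and `ε₋ = 0`
(at `g = 0`) of the generalized Calogero–Yukawa series solution: if
`k(k+1)·a_k = 2α·Σ_{m<k} c_m a_{k−m−1} + ω²a_{k−4} − 2E·a_{k−2}` for `k ≥ 1` and
`b_0 = 0`, `k(k−1)·b_k = 2α·Σ_{m<k} c_m b_{k−m−1} + ω²b_{k−4} − 2E·b_{k−2}` for `k ≥ 2`,
where `c_m = (−1)^m·2^{(m+1)/2}/(m!·λ^m)` and terms of negative index vanish, then
`a_k·b_1 = b_{k+1}·a_0` for all `k ≥ 0`. -/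
theorem calogero_yukawa_branch_mode_proportionality
    (E ω α lam : ℝ) (hlam : lam ≠ 0)
    (c : ℕ → ℝ)
    (hc : ∀ m : ℕ, c m = (-1 : ℝ) ^ m * (Real.sqrt 2 * (Real.sqrt 2) ^ m)
      / ((Nat.factorial m : ℝ) * lam ^ m))
    (a b : ℕ → ℝ)
    (ha : ∀ k : ℕ, 1 ≤ k →
      (k : ℝ) * ((k : ℝ) + 1) * a k
        = 2 * α * ∑ m ∈ Finset.range k, c m * a (k - m - 1)
          + ω ^ 2 * (if 4 ≤ k then a (k - 4) else 0)
          - 2 * E * (if 2 ≤ k then a (k - 2) else 0))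
    (hb0 : b 0 = 0)
    (hb : ∀ k : ℕ, 2 ≤ k →
      (k : ℝ) * ((k : ℝ) - 1) * b k
        = 2 * α * ∑ m ∈ Finset.range k, c m * b (k - m - 1)
          + ω ^ 2 * (if 4 ≤ k then b (k - 4) else 0)
          - 2 * E * (if 2 ≤ k then b (k - 2) else 0)) :
    ∀ k : ℕ, a k * b 1 = b (k + 1) * a 0 := by
  set d : ℕ → ℝ := fun k => b (k + 1) with hd
  -- the shifted sequence d satisfies the same recurrence as a
  have hdrec : ∀ k : ℕ, 1 ≤ k →
      (k : ℝ) * ((k : ℝ) + 1) * d k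
        = 2 * α * ∑ m ∈ Finset.range k, c m * d (k - m - 1)
          + ω ^ 2 * (if 4 ≤ k then d (k - 4) else 0)
          - 2 * E * (if 2 ≤ k then d (k - 2) else 0) := by
    intro k hk
    have h := hb (k + 1) (by omega)
    have hcast : ((k + 1 : ℕ) : ℝ) = (k : ℝ) + 1 := by push_cast; ring
    rw [hcast] at h
    have hL : ((k : ℝ) + 1) * ((k : ℝ) + 1 - 1) * b (k + 1)
        = (k : ℝ) * ((k : ℝ) + 1) * d k := by
      simp only [hd]; ring
    rw [hL] at h
    rw [h]
    congr 1
    · congr 1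
      · congr 1
        rw [Finset.sum_range_succ]
        have hlast : c k * b (k + 1 - k - 1) = 0 := by
          have : k + 1 - k - 1 = 0 := by omega
          rw [this, hb0, mul_zero]
        rw [hlast, add_zero]
        apply Finset.sum_congr rfl
        intro m hm
        have hm' : m < k := Finset.mem_range.mp hm
        have : k + 1 - m - 1 = (k - m - 1) + 1 := by omega
        rw [this]
      · -- ω² term
        by_cases h4 : 4 ≤ k
        · have h4' : 4 ≤ k + 1 := by omega
          rw [if_pos h4', if_pos h4]
          have : k + 1 - 4 = (k - 4) + 1 := by omega
          rw [this]
        · rw [if_neg h4]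
          by_cases h4' : 4 ≤ k + 1
          · rw [if_pos h4']
            have : k + 1 - 4 = 0 := by omega
            rw [this, hb0]
          · rw [if_neg h4']
    · -- E term
      congr 1
      by_cases h2 : 2 ≤ k
      · have h2' : 2 ≤ k + 1 := by omega
        rw [if_pos h2', if_pos h2]
        have : k + 1 - 2 = (k - 2) + 1 := by omega
        rw [this]
      · rw [if_neg h2]
        by_cases h2' : 2 ≤ k + 1
        · rw [if_pos h2']
          have : k + 1 - 2 = 0 := by omega
          rw [this, hb0]
        · rw [if_neg h2']
  -- main claim by strong induction: a k * d 0 = d k * a 0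
  have main : ∀ k : ℕ, a k * d 0 = d k * a 0 := by
    intro k
    induction k using Nat.strong_induction_on with
    | _ k ih =>
      match k with
      | 0 => ring
      | Nat.succ n =>
        set k := n + 1 with hk
        have hk1 : 1 ≤ k := by omega
        have hN : ((k : ℝ) * ((k : ℝ) + 1)) ≠ 0 := by
          have : (0 : ℝ) < (k : ℝ) := by exact_mod_cast Nat.pos_of_ne_zero (by omega)
          positivity
        have hA := ha k hk1
        have hD := hdrec k hk1
        have key : (k : ℝ) * ((k : ℝ) + 1) * (a k * d 0)
            = (k : ℝ) * ((k : ℝ) + 1) * (d k * a 0) := by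
          calc (k : ℝ) * ((k : ℝ) + 1) * (a k * d 0)
              = ((k : ℝ) * ((k : ℝ) + 1) * a k) * d 0 := by ring
            _ = (2 * α * ∑ m ∈ Finset.range k, c m * a (k - m - 1)
                  + ω ^ 2 * (if 4 ≤ k then a (k - 4) else 0)
                  - 2 * E * (if 2 ≤ k then a (k - 2) else 0)) * d 0 := by rw [hA]
            _ = (2 * α * ∑ m ∈ Finset.range k, c m * d (k - m - 1)
                  + ω ^ 2 * (if 4 ≤ k then d (k - 4) else 0)
                  - 2 * E * (if 2 ≤ k then d (k - 2) else 0)) * a 0 := by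
                have hsum : (∑ m ∈ Finset.range k, c m * a (k - m - 1)) * d 0
                    = (∑ m ∈ Finset.range k, c m * d (k - m - 1)) * a 0 := by
                  rw [Finset.sum_mul, Finset.sum_mul]
                  apply Finset.sum_congr rfl
                  intro m hm
                  have := ih (k - m - 1) (by omega)
                  calc c m * a (k - m - 1) * d 0
                      = c m * (a (k - m - 1) * d 0) := by ring
                    _ = c m * (d (k - m - 1) * a 0) := by rw [this]
                    _ = c m * d (k - m - 1) * a 0 := by ring
                have h4 : (if 4 ≤ k then a (k - 4) else 0) * d 0
                    = (if 4 ≤ k then d (k - 4) else 0) * a 0 := by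
                  by_cases h : 4 ≤ k
                  · rw [if_pos h, if_pos h]; exact ih (k - 4) (by omega)
                  · rw [if_neg h, if_neg h, zero_mul, zero_mul]
                have h2 : (if 2 ≤ k then a (k - 2) else 0) * d 0
                    = (if 2 ≤ k then d (k - 2) else 0) * a 0 := by
                  by_cases h : 2 ≤ k
                  · rw [if_pos h, if_pos h]; exact ih (k - 2) (by omega)
                  · rw [if_neg h, if_neg h, zero_mul, zero_mul]
                calc (2 * α * ∑ m ∈ Finset.range k, c m * a (k - m - 1)
                      + ω ^ 2 * (if 4 ≤ k then a (k - 4) else 0)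
                      - 2 * E * (if 2 ≤ k then a (k - 2) else 0)) * d 0
                    = 2 * α * ((∑ m ∈ Finset.range k, c m * a (k - m - 1)) * d 0)
                      + ω ^ 2 * ((if 4 ≤ k then a (k - 4) else 0) * d 0)
                      - 2 * E * ((if 2 ≤ k then a (k - 2) else 0) * d 0) := by ring
                  _ = 2 * α * ((∑ m ∈ Finset.range k, c m * d (k - m - 1)) * a 0)
                      + ω ^ 2 * ((if 4 ≤ k then d (k - 4) else 0) * a 0)
                      - 2 * E * ((if 2 ≤ k then d (k - 2) else 0) * a 0) := by
                        rw [hsum, h4, h2]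
                  _ = (2 * α * ∑ m ∈ Finset.range k, c m * d (k - m - 1)
                      + ω ^ 2 * (if 4 ≤ k then d (k - 4) else 0)
                      - 2 * E * (if 2 ≤ k then d (k - 2) else 0)) * a 0 := by ring
            _ = ((k : ℝ) * ((k : ℝ) + 1) * d k) * a 0 := by rw [hD]
            _ = (k : ℝ) * ((k : ℝ) + 1) * (d k * a 0) := by ring
        exact mul_left_cancel₀ hN key
  intro k
  simpa [hd] using main k
end

section
/- Let E, ω, α, λ be real numbers with λ ≠ 0 and α ≠ 0, and let Φ be a real-analytic function on a neighborhood of 0 which satisfies the ε = 0 Yukawa-type equation Φ''(x) + [2E − ω²x² − (2√2·α/x)·exp(−√2·x/λ)]·Φ(x) = 0 for all x in some interval (0, δ) with δ > 0. Then the zero mode of Φ vanishes: Φ(0) = 0. -/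
/-- For the pure Yukawa-type system (`ε = 0`, `g = 0`) with nonzero coupling `α`, any
analytic solution `Φ` of `Φ'' + [2E − ω²x² − (2√2 α/x)e^{−√2 x/λ}]Φ = 0` on `(0,δ)`
has vanishing zero mode: `Φ(0) = 0`. -/
theorem yukawa_zero_mode_vanishes
    (E ω α lam : ℝ) (hlam : lam ≠ 0) (hα : α ≠ 0)
    (Φ : ℝ → ℝ) (hA : AnalyticAt ℝ Φ 0)
    (δ : ℝ) (hδ : 0 < δ)
    (hODE : ∀ x ∈ Set.Ioo (0 : ℝ) δ,
      deriv (deriv Φ) x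
        + (2 * E - ω ^ 2 * x ^ 2
            - (2 * Real.sqrt 2 * α / x) * Real.exp (-Real.sqrt 2 * x / lam)) * Φ x = 0) :
    Φ 0 = 0 := by
  by_contra h0
  have hΦc : ContinuousAt Φ 0 := hA.continuousAt
  have hdd : ContinuousAt (deriv (deriv Φ)) 0 := by
    obtain ⟨s, hs, hso, h0s⟩ := eventually_nhds_iff.mp hA.eventually_analyticAt
    have hAOn : AnalyticOnNhd ℝ Φ s := fun y hy => hs y hy
    exact ((hAOn.deriv.deriv) 0 h0s).continuousAt
  set l := nhdsWithin (0:ℝ) (Set.Ioi 0) with hl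
  set L : ℝ := 2 * Real.sqrt 2 * α * Φ 0 with hLdef
  have hL0 : L ≠ 0 := by
    have h2 : (2:ℝ) * Real.sqrt 2 ≠ 0 := by positivity
    exact mul_ne_zero (mul_ne_zero h2 hα) h0
  -- g tends to L
  have hgc : ContinuousAt
      (fun x => 2 * Real.sqrt 2 * α * Real.exp (-Real.sqrt 2 * x / lam) * Φ x) 0 := by
    fun_prop
  have hg : Filter.Tendsto
      (fun x => 2 * Real.sqrt 2 * α * Real.exp (-Real.sqrt 2 * x / lam) * Φ x)
      l (nhds L) := by
    have := hgc.tendsto.mono_left (nhdsWithin_le_nhds (s := Set.Ioi (0:ℝ)))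
    simpa [hLdef] using this
  have hinv : Filter.Tendsto (fun x : ℝ => x⁻¹) l Filter.atTop := tendsto_inv_nhdsGT_zero
  -- the LHS tends to a finite limit
  set C : ℝ := deriv (deriv Φ) 0 + (2 * E - ω ^ 2 * 0 ^ 2) * Φ 0 with hCdef
  have hCc : ContinuousAt (fun x => deriv (deriv Φ) x + (2 * E - ω ^ 2 * x ^ 2) * Φ x) 0 := by
    fun_prop
  have hC : Filter.Tendsto (fun x => deriv (deriv Φ) x + (2 * E - ω ^ 2 * x ^ 2) * Φ x)
      l (nhds C) := hCc.tendsto.mono_left nhdsWithin_le_nhds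
  have heq : ∀ᶠ x in l,
      deriv (deriv Φ) x + (2 * E - ω ^ 2 * x ^ 2) * Φ x
        = (2 * Real.sqrt 2 * α * Real.exp (-Real.sqrt 2 * x / lam) * Φ x) * x⁻¹ := by
    filter_upwards [Ioo_mem_nhdsGT_of_mem (Set.left_mem_Ico.mpr hδ)] with x hx
    have hODEx := hODE x hx
    have hx0 : x ≠ 0 := ne_of_gt hx.1
    field_simp at hODEx ⊢
    linarith
  have hC' : Filter.Tendsto
      (fun x => (2 * Real.sqrt 2 * α * Real.exp (-Real.sqrt 2 * x / lam) * Φ x) * x⁻¹)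
      l (nhds C) := hC.congr' heq
  rcases lt_or_gt_of_ne hL0 with hLneg | hLpos
  · have hT : Filter.Tendsto
        (fun x => (2 * Real.sqrt 2 * α * Real.exp (-Real.sqrt 2 * x / lam) * Φ x) * x⁻¹)
        l Filter.atBot := hg.neg_mul_atTop hLneg hinv
    exact not_tendsto_nhds_of_tendsto_atBot hT C hC'
  · have hT : Filter.Tendsto
        (fun x => (2 * Real.sqrt 2 * α * Real.exp (-Real.sqrt 2 * x / lam) * Φ x) * x⁻¹)
        l Filter.atTop := hg.pos_mul_atTop hLpos hinv
    exact not_tendsto_nhds_of_tendsto_atTop hT C hC'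
end

section
/- Let E, ω, α, λ be real numbers with λ ≠ 0 and α ≠ 0, and let Φ be a real-analytic function on a neighborhood of 0 with Φ'(0) ≠ 0 which satisfies the ε = 0 Yukawa-type equation Φ''(x) + [2E − ω²x² − (2√2·α/x)·exp(−√2·x/λ)]·Φ(x) = 0 for all x in some interval (0, δ) with δ > 0. Then, writing C_1 = Φ'(0) and C_3 = Φ'''(0)/6 for the Taylor coefficients of Φ at 0, the energy satisfies E = 2α² − 2α/λ − 3·C_3/C_1. -/
/-!
Multiplying the equation by `x` gives `x Φ'' + P Φ = 0` on `(0, δ)`, where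
`P x = 2E x − ω² x³ − 2√2 α exp (−√2 x / λ)` is analytic at `0`. By the identity theorem this
holds on a whole neighbourhood of `0`, so all derivatives of the left side vanish at `0`; by
Leibniz' rule the `n`-th one is `n Φ⁽ⁿ⁺¹⁾(0) + ∑ᵢ C(n, i) P⁽ⁱ⁾(0) Φ⁽ⁿ⁻ⁱ⁾(0)`.
For `n = 0, 1, 2` this gives `Φ(0) = 0` (as `P(0) = −2√2 α ≠ 0`), `Φ''(0) = 2√2 α Φ'(0)` and
`Φ'''(0) = 2 (2α² − E − 2α/λ) Φ'(0)`.
-/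

open Real Filter Topology Finset

theorem AnalyticAt.eventuallyEq_zero_of_eventually_nhdsGT {E : Type*} [NormedAddCommGroup E]
    [NormedSpace ℝ E] {f : ℝ → E} {a : ℝ} (hf : AnalyticAt ℝ f a)
    (h : ∀ᶠ x in 𝓝[>] a, f x = 0) : f =ᶠ[𝓝 a] 0 :=
  hf.frequently_zero_iff_eventually_zero.1 <|
    h.frequently.filter_mono (nhdsWithin_mono a fun _ hx => ne_of_gt hx)

section
variable {𝕜 : Type*} [NontriviallyNormedField 𝕜]

theorem iteratedDeriv_succ_id_mul_zero {g : 𝕜 → 𝕜} {n : ℕ}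
    (hg : ContDiffAt 𝕜 (n + 1 : ℕ) g 0) :
    iteratedDeriv (n + 1) (fun x => x * g x) 0 = (n + 1) * iteratedDeriv n g 0 := by
  rw [iteratedDeriv_fun_mul (f := fun x => x) contDiffAt_id hg, sum_range_succ', sum_range_succ']
  simp [iteratedDeriv_fun_id_zero]

theorem iteratedDeriv_recurrence_of_mul_deriv_deriv_add_mul_eventuallyEq_zero [CompleteSpace 𝕜]
    {f p : 𝕜 → 𝕜} (hf : AnalyticAt 𝕜 f 0) (hp : AnalyticAt 𝕜 p 0)
    (h : (fun x => x * deriv (deriv f) x + p x * f x) =ᶠ[𝓝 0] 0) (n : ℕ) :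
    n * iteratedDeriv (n + 1) f 0 +
      ∑ i ∈ range (n + 1), n.choose i * iteratedDeriv i p 0 * iteratedDeriv (n - i) f 0 = 0 := by
  have hF := h.iteratedDeriv_eq n
  rw [iteratedDeriv_fun_add (f := fun x => x * deriv (deriv f) x) (g := fun x => p x * f x)
      (contDiffAt_id.mul hf.deriv.deriv.contDiffAt) (hp.contDiffAt.mul hf.contDiffAt),
    iteratedDeriv_fun_mul hp.contDiffAt hf.contDiffAt] at hF
  rcases n with _ | n
  · simpa using hF
  · rw [iteratedDeriv_succ_id_mul_zero hf.deriv.deriv.contDiffAt, ← iteratedDeriv_succ',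
      ← iteratedDeriv_succ'] at hF
    simpa using hF

end

noncomputable def yukawaCoeff (E ω α lam x : ℝ) : ℝ :=
  2 * E * x - ω ^ 2 * x ^ 3 - 2 * √2 * α * exp (-√2 * x / lam)

theorem yukawaCoeff_eq_mul {x : ℝ} (hx : x ≠ 0) (E ω α lam : ℝ) :
    yukawaCoeff E ω α lam x =
      x * (2 * E - ω ^ 2 * x ^ 2 - (2 * √2 * α / x) * exp (-√2 * x / lam)) := by
  unfold yukawaCoeff
  field_simp

theorem analyticAt_yukawaCoeff (E ω α lam x : ℝ) : AnalyticAt ℝ (yukawaCoeff E ω α lam) x := by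
  unfold yukawaCoeff
  fun_prop

theorem iteratedDeriv_yukawaCoeff_zero (E ω α lam : ℝ) (n : ℕ) :
    iteratedDeriv n (yukawaCoeff E ω α lam) 0 =
      2 * E * (if n = 1 then 1 else 0) - ω ^ 2 * (if n = 3 then 6 else 0)
        - 2 * √2 * α * (-√2 / lam) ^ n := by
  have hexp : (fun x => exp (-√2 * x / lam)) = fun x => exp (-√2 / lam * x) := by
    ext x
    ring_nf
  unfold yukawaCoeff
  rw [iteratedDeriv_fun_sub (by fun_prop) (by fun_prop),
    iteratedDeriv_fun_sub (by fun_prop) (by fun_prop), iteratedDeriv_const_mul_field,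
    iteratedDeriv_const_mul_field, iteratedDeriv_const_mul_field, hexp,
    iteratedDeriv_exp_const_mul, iteratedDeriv_fun_id_zero, iteratedDeriv_fun_pow_zero]
  simp [Nat.factorial]

theorem yukawa_energy_formula_general
    (E ω α lam : ℝ) (hα : α ≠ 0)
    (Φ : ℝ → ℝ) (hA : AnalyticAt ℝ Φ 0) (h1 : deriv Φ 0 ≠ 0)
    (δ : ℝ) (hδ : 0 < δ)
    (hODE : ∀ x ∈ Set.Ioo (0 : ℝ) δ,
      deriv (deriv Φ) x
        + (2 * E - ω ^ 2 * x ^ 2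
            - (2 * Real.sqrt 2 * α / x) * Real.exp (-Real.sqrt 2 * x / lam)) * Φ x = 0) :
    E = 2 * α ^ 2 - 2 * α / lam - 3 * (iteratedDeriv 3 Φ 0 / 6) / deriv Φ 0 := by
  have hP := analyticAt_yukawaCoeff E ω α lam 0
  have hF : (fun x => x * deriv (deriv Φ) x + yukawaCoeff E ω α lam x * Φ x) =ᶠ[𝓝 0] 0 := by
    refine AnalyticAt.eventuallyEq_zero_of_eventually_nhdsGT (by fun_prop) ?_
    filter_upwards [Ioo_mem_nhdsGT hδ] with x hx
    rw [yukawaCoeff_eq_mul hx.1.ne', mul_assoc, ← mul_add, hODE x hx, mul_zero]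
  have hrec := iteratedDeriv_recurrence_of_mul_deriv_deriv_add_mul_eventuallyEq_zero hA hP hF
  have hΦ0 : Φ 0 = 0 := by
    simpa [iteratedDeriv_yukawaCoeff_zero, hα] using hrec 0
  have hΦ2 : iteratedDeriv 2 Φ 0 = 2 * √2 * α * deriv Φ 0 := by
    have h := hrec 1
    norm_num [sum_range_succ, iteratedDeriv_yukawaCoeff_zero, hΦ0] at h
    linear_combination h
  have hΦ3 : iteratedDeriv 3 Φ 0 = 2 * (2 * α ^ 2 - E - 2 * α / lam) * deriv Φ 0 := by
    have h := hrec 2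
    norm_num [sum_range_succ, iteratedDeriv_yukawaCoeff_zero, hΦ0, hΦ2] at h
    linear_combination h / 2 + (2 * α ^ 2 - 2 * α / lam) * deriv Φ 0 * sq_sqrt zero_le_two
  rw [hΦ3]
  field_simp
  ring

/-- For the pure Yukawa-type system (`ε = 0`, `g = 0`) with `α ≠ 0`, an analytic
solution `Φ` with `Φ'(0) ≠ 0` determines the energy through its Taylor coefficients
`C₁ = Φ'(0)` and `C₃ = Φ'''(0)/6`: `E = 2α² − 2α/λ − 3·C₃/C₁`. -/
theorem yukawa_energy_formula
    (E ω α lam : ℝ) (hlam : lam ≠ 0) (hα : α ≠ 0)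
    (Φ : ℝ → ℝ) (hA : AnalyticAt ℝ Φ 0) (h1 : deriv Φ 0 ≠ 0)
    (δ : ℝ) (hδ : 0 < δ)
    (hODE : ∀ x ∈ Set.Ioo (0 : ℝ) δ,
      deriv (deriv Φ) x
        + (2 * E - ω ^ 2 * x ^ 2
            - (2 * Real.sqrt 2 * α / x) * Real.exp (-Real.sqrt 2 * x / lam)) * Φ x = 0) :
    E = 2 * α ^ 2 - 2 * α / lam - 3 * (iteratedDeriv 3 Φ 0 / 6) / deriv Φ 0 :=
  yukawa_energy_formula_general E ω α lam hα Φ hA h1 δ hδ hODE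
end
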